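/- (Lemma 2) Let ν ≥ 0 and let f, g be real polynomials such that f(x)·ρ_ν(x) + g(x)·ρ_(ν+1)(x) = 0 for all x > 0. Then f is the zero polynomial and g is the zero polynomial. -/

import Mathlib

open Real MeasureTheory
open Set Filter Topology

lemma macd_cont (ν x : ℝ) : ContinuousOn (fun t : ℝ => t ^ (ν - 1) * Real.exp (-t - x / t)) (Set.Ioi 0) := by
  intro t ht
  have ht0 : (t : ℝ) ≠ 0 := ne_of_gt ht
  apply ContinuousAt.continuousWithinAt
  exact (Real.continuousAt_rpow_const t _ (Or.inl ht0)).mul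
    ((continuousAt_id.neg.sub ((continuousAt_const).div continuousAt_id ht0)).rexp)

lemma macd_integrable (ν : ℝ) {x : ℝ} (hx : 0 < x) :
    IntegrableOn (fun t : ℝ => t ^ (ν - 1) * Real.exp (-t - x / t)) (Set.Ioi 0) := by
  obtain ⟨k, hk⟩ : ∃ k : ℕ, 0 < ν + k := by
    refine ⟨⌈-ν⌉₊ + 1, ?_⟩
    have := Nat.le_ceil (-ν)
    have h2 : (-ν : ℝ) ≤ ⌈-ν⌉₊ := Nat.le_ceil _
    push_cast
    linarith
  have hmaj : IntegrableOn (fun t : ℝ => (Nat.factorial k : ℝ) / x ^ k * (Real.exp (-t) * t ^ (ν + k - 1)))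
      (Set.Ioi 0) := (Real.GammaIntegral_convergent hk).const_mul _
  refine hmaj.integrable.mono ((macd_cont ν x).aestronglyMeasurable measurableSet_Ioi) ?_
  rw [ae_restrict_iff' measurableSet_Ioi]
  filter_upwards with t ht
  have ht0 : (0:ℝ) < t := ht
  have hb : Real.exp (-(x / t)) ≤ (Nat.factorial k : ℝ) * t ^ k / x ^ k := by
    have hxt : 0 < x / t := div_pos hx ht0
    have h1 : (x / t) ^ k / (Nat.factorial k : ℝ) ≤ Real.exp (x / t) :=
      Real.pow_div_factorial_le_exp (x := x/t) hxt.le k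
    have h2 : 0 < (x / t) ^ k / (Nat.factorial k : ℝ) := by positivity
    rw [Real.exp_neg]
    rw [inv_le_comm₀ (Real.exp_pos _) (by positivity)]
    calc ((Nat.factorial k : ℝ) * t ^ k / x ^ k)⁻¹ = (x / t) ^ k / (Nat.factorial k : ℝ) := by
          rw [inv_div, div_pow, div_div, mul_comm (t ^ k)]
      _ ≤ Real.exp (x / t) := h1
  have key : t ^ (ν - 1) * Real.exp (-t - x / t)
      ≤ (Nat.factorial k : ℝ) / x ^ k * (Real.exp (-t) * t ^ (ν + k - 1)) := by
    have : Real.exp (-t - x / t) = Real.exp (-t) * Real.exp (-(x / t)) := by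
      rw [← Real.exp_add]; ring_nf
    rw [this]
    have hpow : t ^ (ν - 1) * t ^ (k : ℝ) = t ^ (ν + k - 1) := by
      rw [← Real.rpow_add ht0]; ring_nf
    calc t ^ (ν - 1) * (Real.exp (-t) * Real.exp (-(x / t)))
        ≤ t ^ (ν - 1) * (Real.exp (-t) * ((Nat.factorial k : ℝ) * t ^ k / x ^ k)) := by
          apply mul_le_mul_of_nonneg_left _ (Real.rpow_nonneg ht0.le _)
          exact mul_le_mul_of_nonneg_left hb (Real.exp_pos _).le
      _ = (Nat.factorial k : ℝ) / x ^ k * (Real.exp (-t) * (t ^ (ν - 1) * t ^ (k:ℝ))) := by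
          rw [Real.rpow_natCast]; ring
      _ = (Nat.factorial k : ℝ) / x ^ k * (Real.exp (-t) * t ^ (ν + k - 1)) := by rw [hpow]
  have h0 : 0 ≤ t ^ (ν - 1) * Real.exp (-t - x / t) := by positivity
  have h0' : 0 ≤ (Nat.factorial k : ℝ) / x ^ k * (Real.exp (-t) * t ^ (ν + k - 1)) := by positivity
  rw [Real.norm_eq_abs, Real.norm_eq_abs, abs_of_nonneg h0, abs_of_nonneg h0']
  exact key

/-- The scaled Macdonald function `ρ_ν(x) = ∫₀^∞ t^(ν−1) e^(−t − x/t) dt`. -/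
noncomputable def rho (ν x : ℝ) : ℝ :=
  ∫ t in Set.Ioi (0 : ℝ), t ^ (ν - 1) * Real.exp (-t - x / t)

lemma rho_pos (ν : ℝ) {x : ℝ} (hx : 0 < x) : 0 < rho ν x := by
  rw [rho, setIntegral_pos_iff_support_of_nonneg_ae ?_ (macd_integrable ν hx)]
  · have : (Function.support fun t : ℝ => t ^ (ν - 1) * Real.exp (-t - x / t)) ∩ Ioi 0
        = Ioi 0 := by
      rw [inter_eq_right]
      intro t ht
      exact mul_ne_zero (Real.rpow_pos_of_pos ht _).ne' (Real.exp_pos _).ne'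
    rw [this, Real.volume_Ioi]
    simp
  · refine eventually_of_mem (self_mem_ae_restrict measurableSet_Ioi) ?_
    exact fun t ht => (mul_pos (Real.rpow_pos_of_pos ht _) (Real.exp_pos _)).le

lemma macd_hasDerivAt (ν x : ℝ) {t : ℝ} (ht : 0 < t) :
    HasDerivAt (fun s : ℝ => s ^ ν * Real.exp (-s - x / s))
      (ν * (t ^ (ν - 1) * Real.exp (-t - x / t))
        + x * (t ^ (ν - 1 - 1) * Real.exp (-t - x / t))
        - t ^ (ν + 1 - 1) * Real.exp (-t - x / t)) t := by
  have h1 : HasDerivAt (fun s : ℝ => s ^ ν) (ν * t ^ (ν - 1)) t :=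
    Real.hasDerivAt_rpow_const (Or.inl ht.ne')
  have h2 : HasDerivAt (fun s : ℝ => -s - x / s) (-1 - x * (-(t ^ 2)⁻¹)) t := by
    have hinv : HasDerivAt (fun s : ℝ => s⁻¹) (-(t ^ 2)⁻¹) t := hasDerivAt_inv ht.ne'
    have := ((hasDerivAt_id t).neg).sub ((hinv.const_mul x))
    simpa [div_eq_mul_inv, Pi.sub_def, Pi.neg_def] using this
  have h3 := h1.mul h2.exp
  refine h3.congr_deriv ?_
  have e1 : t ^ (ν - 1) = t ^ ν / t := Real.rpow_sub_one ht.ne' ν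
  have e2 : t ^ (ν - 1 - 1) = t ^ ν / t / t := by
    rw [Real.rpow_sub_one ht.ne', Real.rpow_sub_one ht.ne']
  have e3 : t ^ (ν + 1 - 1) = t ^ ν := by norm_num
  rw [e1, e2, e3]
  field_simp
  ring

lemma macd_tendsto_atTop (ν x : ℝ) (hx : 0 < x) :
    Tendsto (fun t : ℝ => t ^ ν * Real.exp (-t - x / t)) atTop (𝓝 0) := by
  have h := tendsto_rpow_mul_exp_neg_mul_atTop_nhds_zero ν 1 one_pos
  refine tendsto_of_tendsto_of_tendsto_of_le_of_le' tendsto_const_nhds h ?_ ?_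
  · filter_upwards [eventually_gt_atTop (0:ℝ)] with t ht
    positivity
  · filter_upwards [eventually_gt_atTop (0:ℝ)] with t ht
    have hle : Real.exp (-t - x / t) ≤ Real.exp (-1 * t) := by
      apply Real.exp_le_exp.2
      have : 0 ≤ x / t := (div_pos hx ht).le
      linarith
    exact mul_le_mul_of_nonneg_left hle (Real.rpow_nonneg ht.le _)

lemma macd_tendsto_zero (ν x : ℝ) (hx : 0 < x) :
    Tendsto (fun t : ℝ => t ^ ν * Real.exp (-t - x / t)) (𝓝[>] (0:ℝ)) (𝓝 0) := by
  have h1 : Tendsto (fun s : ℝ => s ^ (-ν) * Real.exp (-x * s)) atTop (𝓝 0) :=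
    tendsto_rpow_mul_exp_neg_mul_atTop_nhds_zero (-ν) x hx
  have h2 : Tendsto (fun t : ℝ => (t⁻¹) ^ (-ν) * Real.exp (-x * t⁻¹)) (𝓝[>] (0:ℝ)) (𝓝 0) :=
    h1.comp tendsto_inv_nhdsGT_zero
  have h3 : Tendsto (fun t : ℝ => Real.exp (-t)) (𝓝[>] (0:ℝ)) (𝓝 1) := by
    have : Tendsto (fun t : ℝ => Real.exp (-t)) (𝓝 (0:ℝ)) (𝓝 1) := by
      have := (Real.continuous_exp.comp continuous_neg).tendsto (0:ℝ)
      simpa [Function.comp_def] using this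
    exact this.mono_left nhdsWithin_le_nhds
  have h4 := h2.mul h3
  rw [zero_mul] at h4
  refine h4.congr' ?_
  filter_upwards [self_mem_nhdsWithin] with t (ht : 0 < t)
  have e1 : (t⁻¹) ^ (-ν) = t ^ ν := by
    rw [Real.inv_rpow ht.le, ← Real.rpow_neg ht.le, neg_neg]
  rw [e1, mul_assoc, ← Real.exp_add]
  congr 2
  field_simp
  ring

lemma rho_rec (ν : ℝ) {x : ℝ} (hx : 0 < x) :
    rho (ν + 1) x = ν * rho ν x + x * rho (ν - 1) x := by
  set F : ℝ → ℝ := fun t => if t ≤ 0 then 0 else t ^ ν * Real.exp (-t - x / t) with hF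
  set F' : ℝ → ℝ := fun t => ν * (t ^ (ν - 1) * Real.exp (-t - x / t))
      + x * (t ^ (ν - 1 - 1) * Real.exp (-t - x / t))
      - t ^ (ν + 1 - 1) * Real.exp (-t - x / t) with hF'
  have hFeq : ∀ᶠ t in 𝓝[>] (0:ℝ), (fun s : ℝ => s ^ ν * Real.exp (-s - x / s)) t = F t := by
    filter_upwards [self_mem_nhdsWithin] with t (ht : 0 < t)
    simp [hF, not_le.2 ht]
  have hcont : ContinuousWithinAt F (Ici 0) 0 := by
    rw [← continuousWithinAt_Ioi_iff_Ici]
    have h0 : F 0 = 0 := by simp [hF]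
    unfold ContinuousWithinAt
    rw [h0]
    exact ((macd_tendsto_zero ν x hx).congr' hFeq)
  have hderiv : ∀ t ∈ Ioi (0:ℝ), HasDerivAt F (F' t) t := by
    intro t ht
    have ht : (0:ℝ) < t := ht
    apply (macd_hasDerivAt ν x ht).congr_of_eventuallyEq
    filter_upwards [Ioi_mem_nhds ht] with s hs
    simp [hF, not_le.2 (show (0:ℝ) < s from hs)]
  have hint : IntegrableOn F' (Ioi (0:ℝ)) := by
    apply Integrable.sub
    · exact ((macd_integrable ν hx).const_mul ν).add ((macd_integrable (ν-1) hx).const_mul x)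
    · exact macd_integrable (ν+1) hx
  have htop : Tendsto F atTop (𝓝 0) := by
    refine (macd_tendsto_atTop ν x hx).congr' ?_
    filter_upwards [eventually_gt_atTop (0:ℝ)] with t ht
    simp [hF, not_le.2 ht]
  have key := integral_Ioi_of_hasDerivAt_of_tendsto hcont hderiv hint htop
  have hF0 : F 0 = 0 := by simp [hF]
  rw [hF0, sub_zero] at key
  have split : (∫ t in Ioi (0:ℝ), F' t)
      = ν * rho ν x + x * rho (ν-1) x - rho (ν+1) x := by
    have h1 : IntegrableOn (fun t : ℝ => ν * (t ^ (ν - 1) * Real.exp (-t - x / t))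
        + x * (t ^ (ν - 1 - 1) * Real.exp (-t - x / t))) (Ioi (0:ℝ)) := by
      exact ((macd_integrable ν hx).const_mul ν).add ((macd_integrable (ν-1) hx).const_mul x)
    have h2 : IntegrableOn (fun t : ℝ => ν * (t ^ (ν - 1) * Real.exp (-t - x / t)))
        (Ioi (0:ℝ)) := by exact (macd_integrable ν hx).const_mul ν
    have h3 : IntegrableOn (fun t : ℝ => x * (t ^ (ν - 1 - 1) * Real.exp (-t - x / t)))
        (Ioi (0:ℝ)) := by exact (macd_integrable (ν-1) hx).const_mul x
    rw [hF']
    rw [integral_sub h1 (macd_integrable (ν+1) hx), integral_add h2 h3,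
      integral_const_mul, integral_const_mul]
    rfl
  rw [split] at key
  linarith

lemma rho_amgm (ν : ℝ) {x : ℝ} (hx : 0 < x) :
    2 * Real.sqrt x * rho ν x ≤ rho (ν + 1) x + x * rho (ν - 1) x := by
  have hL : IntegrableOn (fun t : ℝ => 2 * Real.sqrt x * (t ^ (ν - 1) * Real.exp (-t - x / t)))
      (Ioi (0:ℝ)) := by exact (macd_integrable ν hx).const_mul _
  have hR : IntegrableOn (fun t : ℝ => t ^ (ν + 1 - 1) * Real.exp (-t - x / t)
      + x * (t ^ (ν - 1 - 1) * Real.exp (-t - x / t))) (Ioi (0:ℝ)) := by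
    exact (macd_integrable (ν+1) hx).add ((macd_integrable (ν-1) hx).const_mul x)
  have hmono := setIntegral_mono_on hL hR measurableSet_Ioi ?_
  · calc 2 * Real.sqrt x * rho ν x
        = ∫ t in Ioi (0:ℝ), 2 * Real.sqrt x * (t ^ (ν - 1) * Real.exp (-t - x / t)) := by
          rw [integral_const_mul]; rfl
      _ ≤ ∫ t in Ioi (0:ℝ), (t ^ (ν + 1 - 1) * Real.exp (-t - x / t)
            + x * (t ^ (ν - 1 - 1) * Real.exp (-t - x / t))) := hmono
      _ = rho (ν + 1) x + x * rho (ν - 1) x := by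
          rw [integral_add (macd_integrable (ν+1) hx)
            ((macd_integrable (ν-1) hx).const_mul x), integral_const_mul]
          rfl
  · intro t ht
    have ht : (0:ℝ) < t := ht
    have e0 : t ^ (ν - 1 - 1) = t ^ (ν - 1) / t := Real.rpow_sub_one ht.ne' _
    have e1 : t ^ (ν + 1 - 1) = t ^ (ν - 1) * t := by
      rw [show ν + 1 - 1 = (ν - 1) + 2 - 1 by ring, Real.rpow_sub_one ht.ne',
        Real.rpow_add ht]
      rw [show (2:ℝ) = ((2:ℕ):ℝ) by norm_num, Real.rpow_natCast]
      field_simp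
    rw [e0, e1]
    have hs : Real.sqrt x * Real.sqrt x = x := Real.mul_self_sqrt hx.le
    have hp : (0:ℝ) ≤ t ^ (ν - 1) * Real.exp (-t - x / t) := by positivity
    have hfac : (0:ℝ) ≤ t + x / t - 2 * Real.sqrt x := by
      have h1 : (0:ℝ) ≤ (t - Real.sqrt x) ^ 2 / t := div_nonneg (sq_nonneg _) ht.le
      have h2 : (t - Real.sqrt x) ^ 2 / t = t + x / t - 2 * Real.sqrt x := by
        field_simp
        linear_combination hs
      linarith [h2 ▸ h1]
    have expand : t ^ (ν - 1) * t * Real.exp (-t - x / t)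
        + x * (t ^ (ν - 1) / t * Real.exp (-t - x / t))
        - 2 * Real.sqrt x * (t ^ (ν - 1) * Real.exp (-t - x / t))
        = (t ^ (ν - 1) * Real.exp (-t - x / t)) * (t + x / t - 2 * Real.sqrt x) := by
      field_simp
    linarith [mul_nonneg hp hfac, expand]

lemma rho_lower (ν : ℝ) (hν : 0 ≤ ν) {x : ℝ} (hx : 0 < x) :
    Real.sqrt x * rho ν x ≤ rho (ν + 1) x := by
  have h1 := rho_amgm ν hx
  have h2 := rho_rec ν hx
  have h3 := (rho_pos ν hx).le
  nlinarith [mul_nonneg hν h3]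

lemma rho_upper (ν : ℝ) (hν : 0 ≤ ν) {x : ℝ} (hx : 0 < x)
    (hbig : 2 * (ν + 1) ≤ Real.sqrt x) :
    rho (ν + 1) x ≤ 2 * Real.sqrt x * rho ν x := by
  have hl := rho_lower (ν + 1) (by linarith) hx
  have hr := rho_rec (ν + 1) hx
  have e : ν + 1 - 1 = ν := by ring
  rw [e] at hr
  have hp1 := rho_pos (ν + 1) hx
  have hp0 := rho_pos ν hx
  have hs : Real.sqrt x * Real.sqrt x = x := Real.mul_self_sqrt hx.le
  nlinarith [rho_pos (ν + 1 + 1) hx]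

theorem lemma2 (ν : ℝ) (hν : 0 ≤ ν) (f g : Polynomial ℝ)
    (h : ∀ x : ℝ, 0 < x → f.eval x * rho ν x + g.eval x * rho (ν + 1) x = 0) :
    f = 0 ∧ g = 0 := by
  suffices hg : g = 0 by
    refine ⟨?_, hg⟩
    apply Polynomial.eq_zero_of_infinite_isRoot
    apply Set.Infinite.mono (s := Ioi (0:ℝ)) ?_ (Set.Ioi_infinite (0:ℝ))
    intro x hx
    have hx : (0:ℝ) < x := hx
    have hx2 := h x hx
    rw [hg] at hx2
    simp only [Polynomial.eval_zero, zero_mul, add_zero] at hx2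
    rcases mul_eq_zero.1 hx2 with h1 | h2
    · exact h1
    · exact absurd h2 (rho_pos ν hx).ne'
  by_contra hgne
  set M := max 1 ((2 * (ν + 1)) ^ 2) with hM
  have hM1 : (1:ℝ) ≤ M := le_max_left _ _
  have key : ∀ x : ℝ, M ≤ x →
      Real.sqrt x * |g.eval x| ≤ |f.eval x| ∧ |f.eval x| ≤ 2 * Real.sqrt x * |g.eval x| := by
    intro x hx
    have hx0 : (0:ℝ) < x := lt_of_lt_of_le one_pos (hM1.trans hx)
    have hbig : 2 * (ν + 1) ≤ Real.sqrt x := by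
      have h1 : ((2 * (ν + 1)) ^ 2 : ℝ) ≤ x := (le_max_right _ _).trans hx
      have h2 : (0:ℝ) ≤ 2 * (ν + 1) := by linarith
      calc 2 * (ν + 1) = Real.sqrt ((2 * (ν + 1)) ^ 2) := (Real.sqrt_sq h2).symm
        _ ≤ Real.sqrt x := Real.sqrt_le_sqrt h1
    have hlow := rho_lower ν hν hx0
    have hup := rho_upper ν hν hx0 hbig
    have hp0 := rho_pos ν hx0
    have hp1 := rho_pos (ν + 1) hx0
    have heq := h x hx0
    have habs : |f.eval x| * rho ν x = |g.eval x| * rho (ν + 1) x := by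
      have he : f.eval x * rho ν x = -(g.eval x * rho (ν + 1) x) := by linarith
      calc |f.eval x| * rho ν x = |f.eval x * rho ν x| := by rw [abs_mul, abs_of_pos hp0]
        _ = |g.eval x * rho (ν + 1) x| := by rw [he, abs_neg]
        _ = |g.eval x| * rho (ν + 1) x := by rw [abs_mul, abs_of_pos hp1]
    constructor
    · have h1 : |g.eval x| * (Real.sqrt x * rho ν x) ≤ |g.eval x| * rho (ν + 1) x :=
        mul_le_mul_of_nonneg_left hlow (abs_nonneg _)
      have h2 : Real.sqrt x * |g.eval x| * rho ν x ≤ |f.eval x| * rho ν x := by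
        rw [habs]; linarith
      exact le_of_mul_le_mul_right h2 hp0
    · have h1 : |g.eval x| * rho (ν + 1) x ≤ |g.eval x| * (2 * Real.sqrt x * rho ν x) :=
        mul_le_mul_of_nonneg_left hup (abs_nonneg _)
      have h2 : |f.eval x| * rho ν x ≤ 2 * Real.sqrt x * |g.eval x| * rho ν x := by
        rw [habs]; linarith
      exact le_of_mul_le_mul_right h2 hp0
  have sq_ineq : ∀ x : ℝ, M ≤ x →
      x * (g.eval x * g.eval x) ≤ f.eval x * f.eval x ∧
      f.eval x * f.eval x ≤ 4 * x * (g.eval x * g.eval x) := by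
    intro x hx
    have hx0 : (0:ℝ) < x := lt_of_lt_of_le one_pos (hM1.trans hx)
    have hs : Real.sqrt x * Real.sqrt x = x := Real.mul_self_sqrt hx0.le
    obtain ⟨k1, k2⟩ := key x hx
    have a1 := mul_self_le_mul_self (by positivity) k1
    have a2 := mul_self_le_mul_self (abs_nonneg _) k2
    have habsg := abs_mul_abs_self (g.eval x)
    have e1 : (Real.sqrt x * |g.eval x|) * (Real.sqrt x * |g.eval x|)
        = x * (g.eval x * g.eval x) := by
      linear_combination (|g.eval x| * |g.eval x|) * hs + x * habsg
    have e2 : (2 * Real.sqrt x * |g.eval x|) * (2 * Real.sqrt x * |g.eval x|)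
        = 4 * x * (g.eval x * g.eval x) := by
      linear_combination (4 * (|g.eval x| * |g.eval x|)) * hs + (4 * x) * habsg
    constructor
    · calc x * (g.eval x * g.eval x)
          = (Real.sqrt x * |g.eval x|) * (Real.sqrt x * |g.eval x|) := e1.symm
        _ ≤ |f.eval x| * |f.eval x| := a1
        _ = f.eval x * f.eval x := abs_mul_abs_self _
    · calc f.eval x * f.eval x = |f.eval x| * |f.eval x| := (abs_mul_abs_self _).symm
        _ ≤ (2 * Real.sqrt x * |g.eval x|) * (2 * Real.sqrt x * |g.eval x|) := a2
        _ = 4 * x * (g.eval x * g.eval x) := e2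
  have hgg : g * g ≠ 0 := mul_ne_zero hgne hgne
  have hXgg : (Polynomial.X * (g * g) : Polynomial ℝ) ≠ 0 :=
    mul_ne_zero Polynomial.X_ne_zero hgg
  have hdX : (Polynomial.X * (g * g)).natDegree = 1 + (g.natDegree + g.natDegree) := by
    rw [Polynomial.natDegree_mul Polynomial.X_ne_zero hgg, Polynomial.natDegree_X,
      Polynomial.natDegree_mul hgne hgne]
  by_cases hc : f.natDegree ≤ g.natDegree
  · -- p = f*f - X*(g*g) has negative leading coefficient but is eventually nonneg
    set p : Polynomial ℝ := f * f - Polynomial.X * (g * g) with hp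
    have hlt : (f * f).degree < (Polynomial.X * (g * g)).degree := by
      apply Polynomial.degree_lt_degree
      have := Polynomial.natDegree_mul_le (p := f) (q := f)
      omega
    have hlc : p.leadingCoeff = -(g.leadingCoeff * g.leadingCoeff) := by
      rw [hp, sub_eq_add_neg, Polynomial.leadingCoeff_add_of_degree_lt
        (by rwa [Polynomial.degree_neg]), Polynomial.leadingCoeff_neg,
        Polynomial.leadingCoeff_mul, Polynomial.leadingCoeff_X,
        Polynomial.leadingCoeff_mul, one_mul]
    have hglc : g.leadingCoeff ≠ 0 := Polynomial.leadingCoeff_ne_zero.2 hgne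
    have hlcneg : p.leadingCoeff < 0 := by
      rw [hlc]
      have : 0 < g.leadingCoeff * g.leadingCoeff := mul_self_pos.2 hglc
      linarith
    have hdegp : 0 < p.degree := by
      have : p.degree = (Polynomial.X * (g * g)).degree :=
        Polynomial.degree_sub_eq_right_of_degree_lt hlt
      rw [this, ← Polynomial.natDegree_pos_iff_degree_pos, hdX]
      omega
    have htb := Polynomial.tendsto_atBot_of_leadingCoeff_nonpos p hdegp hlcneg.le
    have ev1 : ∀ᶠ x : ℝ in atTop, Polynomial.eval x p < 0 :=
      htb.eventually (eventually_lt_atBot 0)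
    obtain ⟨x, h1, h2⟩ := (ev1.and (eventually_ge_atTop M)).exists
    have := (sq_ineq x h2).1
    rw [hp] at h1
    simp only [Polynomial.eval_sub, Polynomial.eval_mul, Polynomial.eval_X] at h1
    linarith
  · push_neg at hc
    have hfne : f ≠ 0 := by
      intro hf0
      rw [hf0] at hc
      simp at hc
    set q : Polynomial ℝ := Polynomial.C 4 * (Polynomial.X * (g * g)) - f * f with hq
    have hd4 : (Polynomial.C (4:ℝ) * (Polynomial.X * (g * g))).natDegree
        = 1 + (g.natDegree + g.natDegree) := by
      rw [Polynomial.natDegree_mul (by norm_num : (Polynomial.C (4:ℝ)) ≠ 0) hXgg,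
        Polynomial.natDegree_C, hdX]
      omega
    have hdff : (f * f).natDegree = f.natDegree + f.natDegree :=
      Polynomial.natDegree_mul hfne hfne
    have hlt : (Polynomial.C (4:ℝ) * (Polynomial.X * (g * g))).degree < (f * f).degree := by
      apply Polynomial.degree_lt_degree
      omega
    have hflc : f.leadingCoeff ≠ 0 := Polynomial.leadingCoeff_ne_zero.2 hfne
    have hlc : q.leadingCoeff = -(f.leadingCoeff * f.leadingCoeff) := by
      rw [hq, sub_eq_add_neg, add_comm, Polynomial.leadingCoeff_add_of_degree_lt'
        (by rwa [Polynomial.degree_neg]), Polynomial.leadingCoeff_neg,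
        Polynomial.leadingCoeff_mul]
    have hlcneg : q.leadingCoeff < 0 := by
      rw [hlc]
      have : 0 < f.leadingCoeff * f.leadingCoeff := mul_self_pos.2 hflc
      linarith
    have hdegq : 0 < q.degree := by
      have : q.degree = (f * f).degree := by
        have h' : (Polynomial.C (4:ℝ) * (Polynomial.X * (g * g)) - f * f)
            = -(f * f - Polynomial.C 4 * (Polynomial.X * (g * g))) := by ring
        rw [hq, h', Polynomial.degree_neg, Polynomial.degree_sub_eq_left_of_degree_lt hlt]
      rw [this, ← Polynomial.natDegree_pos_iff_degree_pos, hdff]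
      omega
    have htb := Polynomial.tendsto_atBot_of_leadingCoeff_nonpos q hdegq hlcneg.le
    have ev1 : ∀ᶠ x : ℝ in atTop, Polynomial.eval x q < 0 :=
      htb.eventually (eventually_lt_atBot 0)
    obtain ⟨x, h1, h2⟩ := (ev1.and (eventually_ge_atTop M)).exists
    have := (sq_ineq x h2).2
    rw [hq] at h1
    simp only [Polynomial.eval_sub, Polynomial.eval_mul, Polynomial.eval_X,
      Polynomial.eval_C] at h1
    linarith
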